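/- Let F : 𝕋 → Matrix p k ℂ and G : 𝕋 → Matrix q k ℂ be continuous, let γ > 0, and let G_o : 𝕋 → Matrix k k ℂ be continuous with G_o(z) invertible and G_o(z)ᴴG_o(z) = γ²·I − G(z)ᴴG(z) for all z ∈ 𝕋. If ‖G‖∞ < γ and ‖F·G_o⁻¹‖∞ ≤ 1, then the stacked function satisfies ‖[F; G]‖∞ ≤ γ. -/

import Mathlib

open Matrix

/-- The spectral norm (ℓ²→ℓ² operator norm, largest singular value) of a complex matrix. -/
noncomputable def specNorm {m n : Type*} [Fintype m] [Fintype n] [DecidableEq n]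
    (M : Matrix m n ℂ) : ℝ :=
  ‖LinearMap.toContinuousLinearMap (Matrix.toEuclideanLin M)‖

/-- The `H∞` norm of a matrix-valued function on the unit circle:
`‖F‖∞ = sup_{z ∈ 𝕋} ‖F(z)‖`. -/
noncomputable def hinfNorm {m n : Type*} [Fintype m] [Fintype n] [DecidableEq n]
    (F : Circle → Matrix m n ℂ) : ℝ :=
  ⨆ z : Circle, specNorm (F z)

/-!
Fix `z` and a vector `x`. Since `F = (F G_o⁻¹) G_o` and `‖F G_o⁻¹‖ ≤ 1`, we get
`‖F x‖ ≤ ‖G_o x‖`, while the factorization gives `‖G_o x‖² + ‖G x‖² = γ² ‖x‖²`.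
Hence `‖[F; G] x‖² = ‖F x‖² + ‖G x‖² ≤ γ² ‖x‖²`. The pointwise bound passes to the supremum
because `z ↦ ‖F(z) G_o(z)⁻¹‖` is continuous, hence bounded, on the compact circle.
-/

theorem Continuous.matrix_inv_of_isUnit {X n K : Type*} [TopologicalSpace X] [Fintype n]
    [DecidableEq n] [Field K] [TopologicalSpace K] [IsTopologicalRing K] [ContinuousInv₀ K]
    {A : X → Matrix n n K} (hA : Continuous A) (hunit : ∀ x, IsUnit (A x)) :
    Continuous fun x => (A x)⁻¹ := by
  refine continuous_iff_continuousAt.2 fun x => ?_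
  have hdet : (A x).det ≠ 0 := ((isUnit_iff_isUnit_det _).1 (hunit x)).ne_zero
  have hinv : ContinuousAt Ring.inverse (A x).det := by
    rw [Ring.inverse_eq_inv']
    exact continuousAt_inv₀ hdet
  exact (continuousAt_matrix_inv _ hinv).comp hA.continuousAt

theorem toEuclideanLin_mul_apply {m n l 𝕜 : Type*} [RCLike 𝕜] [Fintype n] [DecidableEq n]
    [Fintype l] [DecidableEq l] (M : Matrix m n 𝕜) (N : Matrix n l 𝕜) (x : EuclideanSpace 𝕜 l) :
    toEuclideanLin (M * N) x = toEuclideanLin M (toEuclideanLin N x) := by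
  rw [toLpLin_mul (q := 2)]
  rfl

section SpecNorm

variable {m n : Type*} [Fintype m] [Fintype n] [DecidableEq n]

theorem norm_toEuclideanLin_le_specNorm_mul (M : Matrix m n ℂ) (x : EuclideanSpace ℂ n) :
    ‖toEuclideanLin M x‖ ≤ specNorm M * ‖x‖ :=
  (LinearMap.toContinuousLinearMap (toEuclideanLin M)).le_opNorm x

theorem specNorm_le_of_norm_toEuclideanLin_le {M : Matrix m n ℂ} {c : ℝ} (hc : 0 ≤ c)
    (h : ∀ x, ‖toEuclideanLin M x‖ ≤ c * ‖x‖) : specNorm M ≤ c :=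
  ContinuousLinearMap.opNorm_le_bound _ hc h

theorem continuous_specNorm : Continuous (specNorm : Matrix m n ℂ → ℝ) :=
  (LinearMap.continuous_of_finiteDimensional
    ((LinearMap.toContinuousLinearMap : (_ →ₗ[ℂ] _) ≃ₗ[ℂ] _).toLinearMap.comp
      (toEuclideanLin : Matrix m n ℂ ≃ₗ[ℂ] _).toLinearMap)).norm

theorem norm_toEuclideanLin_le_specNorm_mul_inv_mul (A : Matrix m n ℂ) {C : Matrix n n ℂ}
    (hC : IsUnit C) (x : EuclideanSpace ℂ n) :
    ‖toEuclideanLin A x‖ ≤ specNorm (A * C⁻¹) * ‖toEuclideanLin C x‖ := by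
  have hA : A = A * C⁻¹ * C := by
    rw [Matrix.mul_assoc, nonsing_inv_mul _ ((isUnit_iff_isUnit_det C).1 hC), Matrix.mul_one]
  calc ‖toEuclideanLin A x‖ = ‖toEuclideanLin (A * C⁻¹) (toEuclideanLin C x)‖ := by
        rw [← toEuclideanLin_mul_apply, ← hA]
    _ ≤ _ := norm_toEuclideanLin_le_specNorm_mul _ _

theorem inner_toEuclideanLin_conjTranspose_mul_self [DecidableEq m] (M : Matrix m n ℂ)
    (x : EuclideanSpace ℂ n) :
    inner ℂ x (toEuclideanLin (Mᴴ * M) x) = (‖toEuclideanLin M x‖ ^ 2 : ℂ) := by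
  rw [toEuclideanLin_mul_apply, toEuclideanLin_conjTranspose_eq_adjoint,
    LinearMap.adjoint_inner_right, inner_self_eq_norm_sq_to_K]
  rfl

theorem norm_toEuclideanLin_sq_add_norm_sq [DecidableEq m] {p : Type*} [Fintype p]
    [DecidableEq p] {C : Matrix m n ℂ} {B : Matrix p n ℂ} {r : ℝ}
    (h : Cᴴ * C + Bᴴ * B = (r : ℂ) • 1) (x : EuclideanSpace ℂ n) :
    ‖toEuclideanLin C x‖ ^ 2 + ‖toEuclideanLin B x‖ ^ 2 = r * ‖x‖ ^ 2 := by
  have hℂ : (‖toEuclideanLin C x‖ ^ 2 + ‖toEuclideanLin B x‖ ^ 2 : ℂ) = r * ‖x‖ ^ 2 := by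
    rw [← inner_toEuclideanLin_conjTranspose_mul_self,
      ← inner_toEuclideanLin_conjTranspose_mul_self, ← inner_add_right, ← LinearMap.add_apply,
      ← map_add, h, _root_.map_smul, toLpLin_one, LinearMap.smul_apply,
      LinearMap.id_apply, inner_smul_right, inner_self_eq_norm_sq_to_K]
    rfl
  exact_mod_cast hℂ

theorem norm_toEuclideanLin_fromRows_sq {p : Type*} [Fintype p] (A : Matrix m n ℂ)
    (B : Matrix p n ℂ) (x : EuclideanSpace ℂ n) :
    ‖toEuclideanLin (fromRows A B) x‖ ^ 2
      = ‖toEuclideanLin A x‖ ^ 2 + ‖toEuclideanLin B x‖ ^ 2 := by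
  simp only [EuclideanSpace.norm_sq_eq, toLpLin_apply, fromRows_mulVec,
    Fintype.sum_sum_type]
  rfl

theorem specNorm_fromRows_le [DecidableEq m] {p : Type*} [Fintype p] [DecidableEq p]
    (A : Matrix m n ℂ) (B : Matrix p n ℂ) {C : Matrix n n ℂ} (hC : IsUnit C) {γ : ℝ}
    (hγ : 0 ≤ γ) (hfact : Cᴴ * C = ((γ : ℂ) ^ 2) • 1 - Bᴴ * B) (hA : specNorm (A * C⁻¹) ≤ 1) :
    specNorm (fromRows A B) ≤ γ := by
  refine specNorm_le_of_norm_toEuclideanLin_le hγ fun x => ?_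
  have hAC : ‖toEuclideanLin A x‖ ≤ ‖toEuclideanLin C x‖ :=
    (norm_toEuclideanLin_le_specNorm_mul_inv_mul A hC x).trans
      (mul_le_of_le_one_left (norm_nonneg _) hA)
  have hsum := norm_toEuclideanLin_sq_add_norm_sq (B := B) (r := γ ^ 2)
    (by rw [hfact, sub_add_cancel]; push_cast; rfl) x
  refine pow_le_pow_iff_left₀ (norm_nonneg _) (by positivity) two_ne_zero |>.1 ?_
  rw [norm_toEuclideanLin_fromRows_sq, mul_pow, ← hsum]
  gcongr

end SpecNorm

theorem specNorm_le_hinfNorm {m n : Type*} [Fintype m] [Fintype n] [DecidableEq n]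
    {F : Circle → Matrix m n ℂ} (hF : Continuous F) (z : Circle) :
    specNorm (F z) ≤ hinfNorm F :=
  le_ciSup (isCompact_range (continuous_specNorm.comp hF)).bddAbove z

theorem hinfNorm_stacked_le_of_general (p q k : ℕ)
    (F : Circle → Matrix (Fin p) (Fin k) ℂ) (hF : Continuous F)
    (G : Circle → Matrix (Fin q) (Fin k) ℂ)
    (γ : ℝ) (hγ : 0 < γ)
    (Go : Circle → Matrix (Fin k) (Fin k) ℂ) (hGoc : Continuous Go)
    (hGo : ∀ z, IsUnit (Go z))
    (hfact : ∀ z, (Go z)ᴴ * Go z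
      = ((γ : ℂ) ^ 2) • (1 : Matrix (Fin k) (Fin k) ℂ) - (G z)ᴴ * G z)
    (hFle : hinfNorm (fun z => F z * (Go z)⁻¹) ≤ 1) :
    hinfNorm (fun z => Matrix.fromRows (F z) (G z)) ≤ γ := by
  have hFGo : Continuous fun z => F z * (Go z)⁻¹ :=
    hF.matrix_mul (hGoc.matrix_inv_of_isUnit hGo)
  refine ciSup_le fun z => specNorm_fromRows_le (F z) (G z) (hGo z) hγ.le (hfact z) ?_
  exact (specNorm_le_hinfNorm hFGo z).trans hFle

/-- If `‖G‖∞ < γ` and `‖F G_o⁻¹‖∞ ≤ 1`, where pointwise `G_o(z)` is invertible with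
`G_o(z)ᴴ G_o(z) = γ²·I − G(z)ᴴ G(z)`, then `‖[F; G]‖∞ ≤ γ`. -/
theorem hinfNorm_stacked_le_of (p q k : ℕ)
    (F : Circle → Matrix (Fin p) (Fin k) ℂ) (hF : Continuous F)
    (G : Circle → Matrix (Fin q) (Fin k) ℂ) (hG : Continuous G)
    (γ : ℝ) (hγ : 0 < γ)
    (Go : Circle → Matrix (Fin k) (Fin k) ℂ) (hGoc : Continuous Go)
    (hGo : ∀ z, IsUnit (Go z))
    (hfact : ∀ z, (Go z)ᴴ * Go z
      = ((γ : ℂ) ^ 2) • (1 : Matrix (Fin k) (Fin k) ℂ) - (G z)ᴴ * G z)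
    (hGlt : hinfNorm G < γ)
    (hFle : hinfNorm (fun z => F z * (Go z)⁻¹) ≤ 1) :
    hinfNorm (fun z => Matrix.fromRows (F z) (G z)) ≤ γ :=
  hinfNorm_stacked_le_of_general p q k F hF G γ hγ Go hGoc hGo hfact hFle
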